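/- Let Δ₊ be the semi-simplex category, w : ℕ → Bool, and let J_w be the Grothendieck topology on Δ₊ in which a sieve S on [k] covers if and only if every morphism f : [l] ⟶ [k] with w l = false belongs to S. A presheaf B on Δ₊ is J_w-separated if and only if B is k-simple for every k with w k = true, where: B is 0-simple means B([0]) is a subsingleton, and for k ≥ 1, B is k-simple means the incidence map B([k]) → B([k-1])^{k+1}, x ↦ (B(δ₀)(x), …, B(δ_k)(x)), is injective. -/

import Mathlib

/-!
If `w k = false`, a `J_w`-covering sieve on `[k]` contains the identity, so it imposes nothing.
If `w k = true`, the sieve generated by the cofaces `δᵢ : [k-1] ⟶ [k]` covers `[k]` (the empty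
sieve when `k = 0`), because every mono into `[k]` other than the identity misses a vertex and so
factors through some `δᵢ`; separation for it is exactly `k`-simplicity. Conversely, two sections
agreeing on a covering sieve of `[k+1]` have faces agreeing on the pulled-back covering sieves of
`[k]`, so by induction on `k` their faces coincide and `k+1`-simplicity finishes.
-/

open CategoryTheory Simplicial Opposite CategoryTheory.GrothendieckTopology

universe w

/-- The semi-simplex category: the wide subcategory of `SimplexCategory`
whose morphisms are the monomorphisms. -/
abbrev SemiSimplexCat : Type :=
  WideSubcategory (MorphismProperty.monomorphisms SimplexCategory)

/-- The coface map `δ i : [k] ⟶ [k+1]` as a morphism of the semi-simplex category. -/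
def semiδ {k : ℕ} (i : Fin (k + 2)) : (⟨⦋k⦌⟩ : SemiSimplexCat) ⟶ ⟨⦋k + 1⦌⟩ :=
  ⟨SimplexCategory.δ i, inferInstanceAs (Mono (SimplexCategory.δ i))⟩


universe u

namespace SemiSimplexCat

lemma len_le_of_hom {X Y : SemiSimplexCat} (f : X ⟶ Y) : X.obj.len ≤ Y.obj.len :=
  haveI := f.2
  SimplexCategory.len_le_of_mono f.1

lemma exists_eq_comp_semiδ_of_len_lt {Y : SemiSimplexCat} {k : ℕ} (f : Y ⟶ ⟨⦋k + 1⦌⟩)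
    (hY : Y.obj.len < k + 1) : ∃ (i : Fin (k + 2)) (g : Y ⟶ ⟨⦋k⦌⟩), f = g ≫ semiδ i := by
  have hf : Mono f.1 := f.2
  have not_surj : ¬ Function.Surjective f.1.toOrderHom := fun hsurj => by
    have := Fintype.card_le_of_surjective _ hsurj
    simp only [SimplexCategory.len_mk, Fintype.card_fin] at this
    omega
  obtain ⟨i, g, hg⟩ := SimplexCategory.eq_comp_δ_of_not_surjective f.1 not_surj
  have : Mono g := by
    rw [hg] at hf
    exact mono_of_mono g (SimplexCategory.δ i)
  exact ⟨i, ⟨g, this⟩, WideSubcategory.hom_ext (h := hg)⟩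

def IsTopologyOf (w : ℕ → Bool) (J : GrothendieckTopology SemiSimplexCat) : Prop :=
  ∀ (X : SemiSimplexCat) (S : Sieve X),
    S ∈ J X ↔ ∀ (Y : SemiSimplexCat) (f : Y ⟶ X), w Y.obj.len = false → S.arrows f

section

variable {w : ℕ → Bool} {J : GrothendieckTopology SemiSimplexCat}
  {B : SemiSimplexCatᵒᵖ ⥤ Type u}

lemma IsTopologyOf.mem_of_len_lt (hJ : IsTopologyOf w J) {X : SemiSimplexCat} {S : Sieve X}
    (hX : w X.obj.len = true) (hS : ∀ (Y : SemiSimplexCat) (f : Y ⟶ X), Y.obj.len < X.obj.len →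
      S.arrows f) : S ∈ J X :=
  (hJ X S).2 fun Y f hY =>
    hS Y f ((len_le_of_hom f).lt_of_ne fun h => by simp [h, hX] at hY)

lemma IsTopologyOf.eq_of_mem_of_eq_false (hJ : IsTopologyOf w J) {X : SemiSimplexCat}
    {S : Sieve X} (hS : S ∈ J X) (hX : w X.obj.len = false)
    {x y : B.obj (op X)} (hxy : ∀ (Y : SemiSimplexCat) (f : Y ⟶ X), S.arrows f →
      B.map f.op x = B.map f.op y) : x = y := by
  simpa using hxy X (𝟙 X) ((hJ X S).1 hS X (𝟙 X) hX)

lemma IsTopologyOf.subsingleton_of_isSeparated (hJ : IsTopologyOf w J)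
    (hB : Presheaf.IsSeparated J B) (hw : w 0 = true) :
    Subsingleton (B.obj (op (⟨⦋0⦌⟩ : SemiSimplexCat))) :=
  ⟨fun x y => hB _ ⊥ (hJ.mem_of_len_lt hw fun _ _ h => absurd h (Nat.not_lt_zero _)) x y
    fun _ _ h => h.elim⟩

lemma IsTopologyOf.injective_faces_of_isSeparated (hJ : IsTopologyOf w J)
    (hB : Presheaf.IsSeparated J B) {k : ℕ} (hw : w (k + 1) = true) :
    Function.Injective (fun (x : B.obj (op (⟨⦋k + 1⦌⟩ : SemiSimplexCat)))
      (i : Fin (k + 2)) => B.map (semiδ i).op x) := by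
  intro x y hxy
  refine hB _ (Sieve.ofArrows _ semiδ) (hJ.mem_of_len_lt hw fun Y f hY => ?_) x y ?_
  · obtain ⟨i, g, rfl⟩ := exists_eq_comp_semiδ_of_len_lt f hY
    exact (Sieve.mem_ofArrows_iff _ _ _).2 ⟨i, g, rfl⟩
  · intro Y f hf
    obtain ⟨i, g, rfl⟩ := (Sieve.mem_ofArrows_iff _ _ _).1 hf
    simp [congrFun hxy i]

lemma IsTopologyOf.eq_of_injective_faces (hJ : IsTopologyOf w J)
    (h0 : w 0 = true → Subsingleton (B.obj (op (⟨⦋0⦌⟩ : SemiSimplexCat))))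
    (hk : ∀ k : ℕ, w (k + 1) = true →
      Function.Injective (fun (x : B.obj (op (⟨⦋k + 1⦌⟩ : SemiSimplexCat)))
        (i : Fin (k + 2)) => B.map (semiδ i).op x))
    (n : ℕ) (S : Sieve (⟨⦋n⦌⟩ : SemiSimplexCat)) (hS : S ∈ J _)
    (x y : B.obj (op (⟨⦋n⦌⟩ : SemiSimplexCat)))
    (hxy : ∀ (Y : SemiSimplexCat) (f : Y ⟶ ⟨⦋n⦌⟩), S.arrows f → B.map f.op x = B.map f.op y) :
    x = y := by
  induction n with
  | zero =>
    cases hw : w 0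
    · exact hJ.eq_of_mem_of_eq_false hS hw hxy
    · exact (h0 hw).elim x y
  | succ m ih =>
    cases hw : w (m + 1)
    · exact hJ.eq_of_mem_of_eq_false hS hw hxy
    · refine hk m hw (funext fun i => ih _ (J.pullback_stable (semiδ i) hS) _ _ fun Y g hg => ?_)
      simpa using hxy Y (g ≫ semiδ i) hg

end

end SemiSimplexCat

open SemiSimplexCat in
theorem stmt9 (w : ℕ → Bool) (J : GrothendieckTopology SemiSimplexCat)
    (hJ : ∀ (X : SemiSimplexCat) (S : Sieve X),
      S ∈ J X ↔ ∀ (Y : SemiSimplexCat) (f : Y ⟶ X), w Y.obj.len = false → S.arrows f)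
    (B : SemiSimplexCatᵒᵖ ⥤ Type u) :
    Presheaf.IsSeparated J B ↔
      ((w 0 = true → Subsingleton (B.obj (op (⟨⦋0⦌⟩ : SemiSimplexCat)))) ∧
        ∀ k : ℕ, w (k + 1) = true →
          Function.Injective (fun (x : B.obj (op (⟨⦋k + 1⦌⟩ : SemiSimplexCat)))
            (i : Fin (k + 2)) => B.map (semiδ i).op x)) := by
  have hJ : IsTopologyOf w J := hJ
  refine ⟨fun hB => ⟨hJ.subsingleton_of_isSeparated hB,
    fun _ => hJ.injective_faces_of_isSeparated hB⟩, fun ⟨h0, hk⟩ => ?_⟩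
  rintro ⟨X⟩ S hS x y hxy
  induction X using SimplexCategory.rec
  exact hJ.eq_of_injective_faces h0 hk _ S hS x y hxy
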